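/- For every integer m ≥ 1, all ξ, F ∈ ℝ, every η ∈ ℝ^m, every f_x ∈ ℂ, and every f_y ∈ ℂ^m: (ξ² + F²)·|f_x|² − 2·Re((ξ − i·F)·conj(f_x)·⟨η, f_y⟩) + 2·|η|²·|f_y|² − |⟨η, f_y⟩|² ≥ 0. Equivalently, the Hermitian block matrix [[ξ² + F², −(ξ − iF)·ηᵀ], [−(ξ + iF)·η, 2|η|²·Id − η·ηᵀ]] acting on ℂ × ℂ^m is positive semidefinite. -/

import Mathlib

open scoped RealInnerProductSpace ComplexConjugate
open Complex

/-- The pairing `⟨η, v⟩ = ∑ j, η j * v j` of a real vector `η` with a complex vector `v`. -/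
noncomputable def cpair {m : ℕ} (η : EuclideanSpace ℝ (Fin m))
    (v : EuclideanSpace ℂ (Fin m)) : ℂ :=
  ∑ j, (η j : ℂ) * v j

/-!
With `a = |ξ - iF|` and `b = |⟨η, f_y⟩|`, the cross term is at most `2 a |f_x| b`, so the
expression is at least `(a |f_x| - b)² + 2 (|η|² |f_y|² - b²)`, and the last bracket is
nonnegative by Cauchy–Schwarz.
-/

noncomputable def EuclideanSpace.complexify {ι : Type*} (η : EuclideanSpace ℝ ι) :
    EuclideanSpace ℂ ι :=
  WithLp.toLp 2 fun j => (η j : ℂ)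

lemma EuclideanSpace.norm_complexify {ι : Type*} [Fintype ι] (η : EuclideanSpace ℝ ι) :
    ‖η.complexify‖ = ‖η‖ := by
  simp [EuclideanSpace.norm_eq, EuclideanSpace.complexify]

lemma cpair_eq_inner {m : ℕ} (η : EuclideanSpace ℝ (Fin m)) (v : EuclideanSpace ℂ (Fin m)) :
    cpair η v = inner ℂ η.complexify v := by
  simp [cpair, EuclideanSpace.complexify, PiLp.inner_apply, mul_comm]

lemma norm_cpair_le {m : ℕ} (η : EuclideanSpace ℝ (Fin m)) (v : EuclideanSpace ℂ (Fin m)) :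
    ‖cpair η v‖ ≤ ‖η‖ * ‖v‖ := by
  rw [cpair_eq_inner, ← η.norm_complexify]
  exact norm_inner_le_norm _ _

lemma Complex.re_mul_conj_mul_le (z w u : ℂ) : (z * conj w * u).re ≤ ‖z‖ * ‖w‖ * ‖u‖ :=
  calc (z * conj w * u).re ≤ ‖z * conj w * u‖ := re_le_norm _
    _ = ‖z‖ * ‖w‖ * ‖u‖ := by rw [norm_mul, norm_mul, norm_conj]

lemma Complex.sq_norm_ofReal_sub_I_mul (ξ F : ℝ) : ‖(ξ : ℂ) - I * F‖ ^ 2 = ξ ^ 2 + F ^ 2 := by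
  rw [Complex.sq_norm, normSq_apply]
  simp only [sub_re, ofReal_re, mul_re, I_re, I_im, ofReal_im, sub_im, mul_im]
  ring

lemma sq_mul_sq_sub_two_mul_add_nonneg {a x b c : ℝ} (hb : 0 ≤ b) (hbc : b ≤ c) :
    0 ≤ a ^ 2 * x ^ 2 - 2 * (a * x * b) + 2 * c ^ 2 - b ^ 2 := by
  nlinarith [sq_nonneg (a * x - b), mul_le_mul hbc hbc hb (hb.trans hbc)]

theorem stmt_6_general (m : ℕ)
    (ξ F : ℝ) (η : EuclideanSpace ℝ (Fin m))
    (f_x : ℂ) (f_y : EuclideanSpace ℂ (Fin m)) :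
    0 ≤ (ξ ^ 2 + F ^ 2) * ‖f_x‖ ^ 2
        - 2 * (((ξ : ℂ) - I * (F : ℂ)) * conj f_x * cpair η f_y).re
        + 2 * ‖η‖ ^ 2 * ‖f_y‖ ^ 2 - ‖cpair η f_y‖ ^ 2 := by
  have hcross := re_mul_conj_mul_le ((ξ : ℂ) - I * F) f_x (cpair η f_y)
  have hquad := sq_mul_sq_sub_two_mul_add_nonneg (a := ‖(ξ : ℂ) - I * F‖) (x := ‖f_x‖)
    (norm_nonneg _) (norm_cpair_le η f_y)
  rw [mul_pow] at hquad
  rw [← sq_norm_ofReal_sub_I_mul]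
  linarith

theorem stmt_6 (m : ℕ) (hm : 1 ≤ m)
    (ξ F : ℝ) (η : EuclideanSpace ℝ (Fin m))
    (f_x : ℂ) (f_y : EuclideanSpace ℂ (Fin m)) :
    0 ≤ (ξ ^ 2 + F ^ 2) * ‖f_x‖ ^ 2
        - 2 * (((ξ : ℂ) - I * (F : ℂ)) * conj f_x * cpair η f_y).re
        + 2 * ‖η‖ ^ 2 * ‖f_y‖ ^ 2 - ‖cpair η f_y‖ ^ 2 :=
  stmt_6_general m ξ F η f_x f_y
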